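/- Suppose a game H is obtained from a game G by replacing each terminal position t of G with a fixed finite 'gadget' subgame whose unique outcome (with optimal play by both sides) equals the outcome of t in G, and such that no moves lead from gadget positions back to non-gadget positions. Then for every non-terminal position q of G, player p wins G from q if and only if p wins H from the corresponding position. (Gadget-substitution lemma used to replace checkmate gadgets with selfmate, reflexmate, and semi-reflexmate gadgets.) -/
import Mathlib


/-- The two players of a two-player game. -/
inductive Player
  | White
  | Black
  deriving DecidableEq

/-- The opponent of a player. -/
def Player.other : Player → Player
  | .White => .Black
  | .Black => .White

/-- A two-player game: a type of positions, a turn function and a move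
relation.  The convention is that a player to move with no legal moves
loses. -/
structure Game where
  Position : Type
  turn : Position → Player
  moves : Position → Position → Prop

/-- `G.Wins p q` : player `p` has a winning strategy from `q`, defined
inductively: if it is `p`'s turn, some move leads to a `p`-winning position;
if it is the opponent's turn, every move leads to a `p`-winning position (in
particular `p` wins if the opponent is to move with no legal moves). -/
inductive Game.Wins (G : Game) (p : Player) : G.Position → Prop
  | mover (q q' : G.Position) (h : G.turn q = p) (hm : G.moves q q')
      (hw : Game.Wins G p q') : Game.Wins G p q
  | opponent (q : G.Position) (h : G.turn q ≠ p)
      (hall : ∀ q', G.moves q q' → Game.Wins G p q') : Game.Wins G p q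

/-- A position is terminal if it has no moves. -/
def Game.Terminal (G : Game) (q : G.Position) : Prop :=
  ∀ q', ¬ G.moves q q'

/-- Winning strategies on a game whose terminal positions are labeled with a
winner by `w`. -/
inductive Game.WinsLabeled (G : Game) (w : G.Position → Player) (p : Player) :
    G.Position → Prop
  | terminal (q : G.Position) (hterm : ∀ q', ¬ G.moves q q') (h : w q = p) :
      Game.WinsLabeled G w p q
  | mover (q q' : G.Position) (h : G.turn q = p) (hm : G.moves q q')
      (hw : Game.WinsLabeled G w p q') : Game.WinsLabeled G w p q
  | opponent (q : G.Position) (h : G.turn q ≠ p) (hne : ∃ q', G.moves q q')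
      (hall : ∀ q', G.moves q q' → Game.WinsLabeled G w p q') :
      Game.WinsLabeled G w p q

/-- The move relation of the substituted game `H` : moves of `G` between
non-terminal positions are kept, moves of `G` into a terminal position `t`
become moves into the initial position of the gadget `Gad t`, and within a
gadget moves are those of the gadget; no move leads from a gadget back. -/
inductive SubstMove (G : Game) (Gad : G.Position → Game)
    (init : ∀ t, (Gad t).Position) :
    (G.Position ⊕ (Σ t : G.Position, (Gad t).Position)) →
    (G.Position ⊕ (Σ t : G.Position, (Gad t).Position)) → Prop
  | base (q q' : G.Position) (hm : G.moves q q') (h : ¬ G.Terminal q') :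
      SubstMove G Gad init (Sum.inl q) (Sum.inl q')
  | enter (q t : G.Position) (hm : G.moves q t) (h : G.Terminal t) :
      SubstMove G Gad init (Sum.inl q) (Sum.inr ⟨t, init t⟩)
  | gadget (t : G.Position) (g g' : (Gad t).Position) (hm : (Gad t).moves g g') :
      SubstMove G Gad init (Sum.inr ⟨t, g⟩) (Sum.inr ⟨t, g'⟩)

/-- The game `H` obtained from `G` by replacing each terminal position `t`
with the gadget game `Gad t`. -/
def substGame (G : Game) (Gad : G.Position → Game)
    (init : ∀ t, (Gad t).Position) : Game where
  Position := G.Position ⊕ (Σ t : G.Position, (Gad t).Position)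
  turn := fun x => match x with
    | Sum.inl q => G.turn q
    | Sum.inr ⟨t, g⟩ => (Gad t).turn g
  moves := SubstMove G Gad init

/-- In a well-founded game, at most one player wins from a position. -/
lemma wins_unique (G : Game) (wf : WellFounded (fun q' q => G.moves q q')) :
    ∀ q : G.Position, ∀ p p' : Player, p ≠ p' → G.Wins p q → G.Wins p' q → False := by
  intro q
  induction q using WellFounded.induction wf with
  | _ q ih =>
    intro p p' hne h1 h2
    cases h1 with
    | mover _ q1 h hm hw =>
      cases h2 with
      | mover _ q2 h' hm' hw' => exact hne (h.symm.trans h')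
      | opponent _ h' hall => exact ih q1 hm p p' hne hw (hall q1 hm)
    | opponent _ h hall =>
      cases h2 with
      | mover _ q2 h' hm hw => exact ih q2 hm p p' hne (hall q2 hm) hw
      | opponent _ h' hall' =>
        cases hp : G.turn q <;> cases p <;> cases p' <;> simp_all

/-- Winning in a gadget lifts to the substituted game. -/
lemma lift_gadget (G : Game) (Gad : G.Position → Game)
    (init : ∀ t, (Gad t).Position) (p : Player) (t : G.Position) :
    ∀ g : (Gad t).Position, (Gad t).Wins p g →
      (substGame G Gad init).Wins p (Sum.inr ⟨t, g⟩) := by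
  intro g hw
  induction hw with
  | mover g g' h hm hw ih =>
    exact .mover _ _ h (SubstMove.gadget t g g' hm) ih
  | opponent g h hall ih =>
    refine .opponent _ h ?_
    intro x hx
    cases hx with
    | gadget _ _ g' hm => exact ih g' hm

/-- Winning in the substituted game at a gadget position gives winning in the
gadget. -/
lemma unlift_gadget (G : Game) (Gad : G.Position → Game)
    (init : ∀ t, (Gad t).Position) (p : Player)
    (x : (substGame G Gad init).Position)
    (hw : (substGame G Gad init).Wins p x) :
    ∀ (t : G.Position) (g : (Gad t).Position), x = Sum.inr ⟨t, g⟩ →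
      (Gad t).Wins p g := by
  induction hw with
  | mover x x' h hm hw ih =>
    intro t g hx
    subst hx
    cases hm with
    | gadget _ _ g' hm' => exact .mover g g' h hm' (ih t g' rfl)
  | opponent x h hall ih =>
    intro t g hx
    subst hx
    exact .opponent g h (fun g' hm' => ih _ (SubstMove.gadget t g g' hm') t g' rfl)

lemma gadget_forward (G : Game) (winner : G.Position → Player)
    (Gad : G.Position → Game) (init : ∀ t, (Gad t).Position)
    (hGad : ∀ t, G.Terminal t → (Gad t).Wins (winner t) (init t))
    (p : Player) :
    ∀ q : G.Position, G.WinsLabeled winner p q →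
      (¬ G.Terminal q → (substGame G Gad init).Wins p (Sum.inl q)) ∧
      (G.Terminal q → (substGame G Gad init).Wins p (Sum.inr ⟨q, init q⟩)) := by
  intro q hw
  induction hw with
  | terminal q hterm h =>
    refine ⟨fun hnt => absurd hterm hnt, fun _ => ?_⟩
    exact lift_gadget G Gad init p q (init q) (h ▸ hGad q hterm)
  | mover q q' h hm hw ih =>
    constructor
    · intro _
      by_cases ht : G.Terminal q'
      · exact .mover _ _ h (SubstMove.enter q q' hm ht) (ih.2 ht)
      · exact .mover _ _ h (SubstMove.base q q' hm ht) (ih.1 ht)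
    · intro ht; exact absurd hm (ht q')
  | opponent q h hne hall ih =>
    constructor
    · intro _
      refine .opponent _ h ?_
      intro x hx
      cases hx with
      | base _ q' hm hnt' => exact (ih q' hm).1 hnt'
      | enter _ t hm ht => exact (ih t hm).2 ht
    · intro ht
      obtain ⟨q', hm⟩ := hne
      exact absurd hm (ht q')

lemma gadget_backward (G : Game) (winner : G.Position → Player)
    (Gad : G.Position → Game) (init : ∀ t, (Gad t).Position)
    (wfGad : ∀ t, WellFounded (fun g' g => (Gad t).moves g g'))
    (hGad : ∀ t, G.Terminal t → (Gad t).Wins (winner t) (init t))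
    (p : Player) (x : (substGame G Gad init).Position)
    (hw : (substGame G Gad init).Wins p x) :
    ∀ q : G.Position, x = Sum.inl q → ¬ G.Terminal q →
      G.WinsLabeled winner p q := by
  induction hw with
  | mover x x' h hm hw ih =>
    intro q hx hnt
    subst hx
    cases hm with
    | base _ q' hm' hnt' => exact .mover q q' h hm' (ih q' rfl hnt')
    | enter _ t hm' ht =>
      have hg : (Gad t).Wins p (init t) :=
        unlift_gadget G Gad init p _ hw t (init t) rfl
      have hwt : winner t = p := by
        by_contra hne
        exact wins_unique (Gad t) (wfGad t) (init t) (winner t) p hne (hGad t ht) hg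
      exact .mover q t h hm' (.terminal t ht hwt)
  | opponent x h hall ih =>
    intro q hx hnt
    subst hx
    have hne : ∃ q', G.moves q q' := by
      simp only [Game.Terminal, not_forall, not_not] at hnt
      exact hnt
    refine .opponent q h hne ?_
    intro q' hm
    by_cases ht : G.Terminal q'
    · have hw' := hall _ (SubstMove.enter q q' hm ht)
      have hg : (Gad q').Wins p (init q') :=
        unlift_gadget G Gad init p _ hw' q' (init q') rfl
      have hwt : winner q' = p := by
        by_contra hne'
        exact wins_unique (Gad q') (wfGad q') (init q') (winner q') p hne'
          (hGad q' ht) hg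
      exact .terminal q' ht hwt
    · exact ih _ (SubstMove.base q q' hm ht) q' rfl ht

/-- Gadget-substitution lemma: if `H` is obtained from the well-founded game
`G` (with terminal positions labeled by a winner) by replacing each terminal
position `t` by a well-founded gadget game whose outcome under optimal play
from its initial position equals the label of `t`, then for every
non-terminal position `q` of `G`, player `p` wins `G` from `q` iff `p` wins
`H` from the corresponding position. -/
theorem gadget_substitution (G : Game) (winner : G.Position → Player)
    (Gad : G.Position → Game) (init : ∀ t, (Gad t).Position)
    (wfG : WellFounded (fun q' q => G.moves q q'))
    (wfGad : ∀ t, WellFounded (fun g' g => (Gad t).moves g g'))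
    (hGad : ∀ t, G.Terminal t → (Gad t).Wins (winner t) (init t))
    (p : Player) (q : G.Position) (hq : ¬ G.Terminal q) :
    G.WinsLabeled winner p q ↔ (substGame G Gad init).Wins p (Sum.inl q) := by
  constructor
  · intro h
    exact (gadget_forward G winner Gad init hGad p q h).1 hq
  · intro h
    exact gadget_backward G winner Gad init wfGad hGad p _ h q rfl hq
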